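/- arXiv:math/0408203 — 3 statements merged into one kernel-verified Lean document; each statement's English description precedes it below -/
import Mathlib

section
/- Let J1, J2 ⊂ (1/m,1) be closed intervals such that for every γ ∈ J1, λ ∈ J2 and f ∈ 𝓑, it is not the case that both γ and λ are roots of f of multiplicity ≥ 2. Then 𝓑 can be partitioned into two disjoint subsets 𝓑′ and 𝓑″ such that J1 is a set of transversality for 𝓑′ and J2 is a set of transversality for 𝓑″. -/
/-!
All coefficients of a series in `𝓑` lie in the finite set `D − D`, so `𝓑` is compact in the
product topology, and on a disc of radius `ρ < 1` the series and its first two derivatives are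
bounded uniformly on `𝓑`, while `jetNorm f x = max |f x| |f' x|` is jointly continuous in `(f, x)`.
By hypothesis `max (jetNorm f γ) (jetNorm f λ) > 0` on the compact set `𝓑 × J₁ × J₂`, hence it is
`≥ δ > 0` there. Put `f` into `𝓑′` when `jetNorm f ≥ δ` on all of `J₁`; every other `f` has
`jetNorm f < δ` somewhere on `J₁`, hence `jetNorm f ≥ δ` on all of `J₂`.

Transversality then follows from a real-variable estimate: if `|f''| ≤ C` and
`max |f| |f'| ≥ δ` on an interval, then on each subinterval of length `δ / (2C)` the points with
`|f| < r ≤ δ / 2` satisfy `|f'| ≥ δ / 2` between them, so they span at most `4r / δ`, and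
`{|f| < r}` has measure `O(r)`.
-/

open MeasureTheory Filter Set
open scoped ENNReal Topology

noncomputable section

/-- Evaluation of the power series with coefficient sequence `c` at `x`. -/
def Beval (c : ℕ → ℝ) (x : ℝ) : ℝ := ∑' n, c n * x ^ n

/-- Membership in `𝓑̃`: all coefficients lie in `D − D`. -/
def memBtilde (m : ℕ) (d : Fin m → ℝ) (c : ℕ → ℝ) : Prop :=
  ∀ n, ∃ i j, c n = d i - d j

/-- Membership in `𝓑`: all coefficients lie in `D − D` and the constant term is nonzero. -/
def memB (m : ℕ) (d : Fin m → ℝ) (c : ℕ → ℝ) : Prop :=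
  memBtilde m d c ∧ c 0 ≠ 0

/-- `α` is a root of multiplicity at least 2 of the power series with coefficients `c`. -/
def HasDoubleRootAt (c : ℕ → ℝ) (α : ℝ) : Prop :=
  Beval c α = 0 ∧ deriv (Beval c) α = 0

/-- `J` is a set of transversality for `B ⊆ 𝓑`. -/
def IsTransvOn (J : Set ℝ) (B : Set (ℕ → ℝ)) : Prop :=
  ∃ M : ℝ, 0 < M ∧ ∀ c ∈ B, ∀ r : ℝ, 0 < r →
    volume {α ∈ J | |Beval c α| < r} < ENNReal.ofReal (M * r)

open scoped Pointwise
open Metric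

theorem volume_le_of_abs_sub_le {S : Set ℝ} {a b h ε : ℝ} (hab : a ≤ b) (hh : 0 < h)
    (hε : 0 ≤ ε) (hS : S ⊆ Icc a b) (hSε : ∀ x ∈ S, ∀ y ∈ S, |y - x| ≤ h → |y - x| ≤ ε) :
    volume S ≤ ENNReal.ofReal (((b - a) / h + 1) * ε) := by
  set N := ⌊(b - a) / h⌋₊ + 1
  set I : ℕ → Set ℝ := fun k => Icc (a + k * h) (a + k * h + h)
  have hcover : S ⊆ ⋃ k ∈ Finset.range N, S ∩ I k := by
    intro x hx
    have hq : 0 ≤ (x - a) / h := div_nonneg (sub_nonneg.2 (hS hx).1) hh.le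
    refine mem_biUnion (x := ⌊(x - a) / h⌋₊) (Finset.mem_range.2 ?_) ⟨hx, ?_, ?_⟩
    · exact Nat.lt_succ_of_le (Nat.floor_le_floor (by gcongr; exact (hS hx).2))
    · have := Nat.floor_le hq
      rw [le_div_iff₀ hh] at this
      linarith
    · have := Nat.lt_floor_add_one ((x - a) / h)
      rw [div_lt_iff₀ hh] at this
      linarith
  have hpiece : ∀ k, volume (S ∩ I k) ≤ ENNReal.ofReal ε := fun k =>
    (Real.volume_le_diam _).trans <| Metric.ediam_le_of_forall_dist_le fun x hx y hy => by
      rw [Real.dist_eq, abs_sub_comm]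
      exact hSε x hx.1 y hy.1 (abs_sub_le_iff.2
        ⟨by linarith [hx.2.1, hy.2.2], by linarith [hx.2.2, hy.2.1]⟩)
  have hN : (N : ℝ) ≤ (b - a) / h + 1 := by
    push_cast [N]
    linarith [Nat.floor_le (div_nonneg (sub_nonneg.2 hab) hh.le)]
  calc volume S ≤ ∑ k ∈ Finset.range N, volume (S ∩ I k) :=
        (measure_mono hcover).trans (measure_biUnion_finset_le _ _)
    _ ≤ ∑ _k ∈ Finset.range N, ENNReal.ofReal ε := Finset.sum_le_sum fun k _ => hpiece k
    _ = ENNReal.ofReal (N * ε) := by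
        rw [Finset.sum_const, Finset.card_range, nsmul_eq_mul,
          ENNReal.ofReal_mul (Nat.cast_nonneg _), ENNReal.ofReal_natCast]
    _ ≤ ENNReal.ofReal (((b - a) / h + 1) * ε) :=
        ENNReal.ofReal_le_ofReal (mul_le_mul_of_nonneg_right hN hε)

theorem mul_abs_sub_le_of_abs_lt {f f' f'' : ℝ → ℝ} {s : Set ℝ} {C δ r x y : ℝ}
    (hs : s.OrdConnected) (hC : 0 < C) (hf : ∀ z ∈ s, HasDerivAt f (f' z) z)
    (hf' : ∀ z ∈ s, HasDerivAt f' (f'' z) z)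
    (hf'' : ∀ z ∈ s, |f'' z| ≤ C) (hδ : ∀ z ∈ s, δ ≤ max |f z| |f' z|) (hrδ : r ≤ δ / 2)
    (hx : x ∈ s) (hy : y ∈ s) (hfx : |f x| < r) (hfy : |f y| < r) (hxy : |y - x| ≤ δ / (2 * C)) :
    δ * |y - x| ≤ 4 * r := by
  wlog hlt : x < y generalizing x y
  · rcases (not_lt.1 hlt).eq_or_lt with rfl | hyx
    · simp only [sub_self, abs_zero, mul_zero]
      linarith [(abs_nonneg _).trans_lt hfx]
    · rw [abs_sub_comm] at hxy ⊢
      exact this hy hx hfy hfx hxy hyx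
  have hIcc : Icc x y ⊆ s := hs.out hx hy
  obtain ⟨ξ, hξ, hslope⟩ := exists_hasDerivAt_eq_slope f f' hlt
    (fun z hz => (hf z (hIcc hz)).continuousAt.continuousWithinAt)
    fun z hz => hf z (hIcc (Ioo_subset_Icc_self hz))
  have hf'x : δ ≤ |f' x| :=
    (le_max_iff.1 (hδ x hx)).resolve_left (by linarith [abs_nonneg (f x)])
  have hf'ξx : |f' ξ - f' x| ≤ δ / 2 := by
    have hξx : |ξ - x| ≤ δ / (2 * C) := by
      rw [abs_of_pos (sub_pos.2 hξ.1)]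
      rw [abs_of_pos (sub_pos.2 hlt)] at hxy
      linarith [hξ.2]
    calc |f' ξ - f' x| ≤ C * |ξ - x| :=
          (convex_Icc x y).norm_image_sub_le_of_norm_hasDerivWithin_le
            (fun z hz => (hf' z (hIcc hz)).hasDerivWithinAt) (fun z hz => hf'' z (hIcc hz))
            (left_mem_Icc.2 hlt.le) (Ioo_subset_Icc_self hξ)
      _ ≤ C * (δ / (2 * C)) := by gcongr
      _ = δ / 2 := by field_simp
  have hf'ξ : δ / 2 ≤ |f' ξ| := by
    linarith [abs_sub_abs_le_abs_sub (f' x) (f' ξ), abs_sub_comm (f' x) (f' ξ)]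
  have hfyx : |f y - f x| = |f' ξ| * (y - x) := by
    rw [hslope, abs_div, abs_of_pos (sub_pos.2 hlt), div_mul_cancel₀ _ (sub_pos.2 hlt).ne']
  rw [abs_of_pos (sub_pos.2 hlt)]
  nlinarith [abs_sub (f y) (f x)]

theorem exists_volume_abs_lt_lt_mul (a b C δ : ℝ) (hδ : 0 < δ) :
    ∃ M > 0, ∀ f f' f'' : ℝ → ℝ, (∀ x ∈ Icc a b, HasDerivAt f (f' x) x) →
      (∀ x ∈ Icc a b, HasDerivAt f' (f'' x) x) → (∀ x ∈ Icc a b, |f'' x| ≤ C) →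
      (∀ x ∈ Icc a b, δ ≤ max |f x| |f' x|) →
      ∀ r > 0, volume {x ∈ Icc a b | |f x| < r} < ENNReal.ofReal (M * r) := by
  rcases lt_or_ge b a with hba | hab
  · refine ⟨1, one_pos, fun f _ _ _ _ _ _ r hr => ?_⟩
    simpa [Icc_eq_empty_of_lt hba] using hr
  have hL : 0 ≤ b - a := sub_nonneg.2 hab
  set C' := max C 1
  set h := δ / (2 * C')
  set K := ((b - a) / h + 1) * (4 / δ) + 2 * (b - a) / δ
  have hK : 0 ≤ K := by positivity
  refine ⟨K + 1, by linarith, fun f f' f'' hf hf' hf'' hδf r hr => ?_⟩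
  have hKr : K * r = ((b - a) / h + 1) * (4 * r / δ) + (b - a) * (2 * r / δ) := by ring
  have hS : volume {x ∈ Icc a b | |f x| < r} ≤ ENNReal.ofReal (K * r) := by
    rcases le_or_gt r (δ / 2) with hrδ | hrδ
    · calc volume {x ∈ Icc a b | |f x| < r}
          ≤ ENNReal.ofReal (((b - a) / h + 1) * (4 * r / δ)) :=
            volume_le_of_abs_sub_le hab (by positivity) (by positivity) (sep_subset _ _)
              fun x hx y hy hxy => by
                rw [le_div_iff₀' hδ]
                exact mul_abs_sub_le_of_abs_lt ordConnected_Icc (by positivity) hf hf'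
                  (fun z hz => (hf'' z hz).trans (le_max_left _ _)) hδf hrδ
                  hx.1 hy.1 hx.2 hy.2 hxy
        _ ≤ ENNReal.ofReal (K * r) := ENNReal.ofReal_le_ofReal
          (by rw [hKr]; exact le_add_of_nonneg_right (by positivity))
    · calc volume {x ∈ Icc a b | |f x| < r} ≤ volume (Icc a b) := measure_mono (sep_subset _ _)
        _ = ENNReal.ofReal (b - a) := Real.volume_Icc
        _ ≤ ENNReal.ofReal (K * r) := by
          refine ENNReal.ofReal_le_ofReal ?_
          have : 1 ≤ 2 * r / δ := by rw [le_div_iff₀ hδ]; linarith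
          rw [hKr]
          nlinarith [show 0 ≤ ((b - a) / h + 1) * (4 * r / δ) by positivity]
  exact hS.trans_lt ((ENNReal.ofReal_lt_ofReal_iff (by positivity)).2 (by nlinarith))

def derivCoeff (c : ℕ → ℝ) (n : ℕ) : ℝ := ((n : ℝ) + 1) * c (n + 1)

def polyBounded (A : ℝ) (k : ℕ) : Set (ℕ → ℝ) := {c | ∀ n, |c n| ≤ A * ((n : ℝ) + 1) ^ k}

lemma continuous_derivCoeff : Continuous derivCoeff :=
  continuous_pi fun n => continuous_const.mul (continuous_apply (n + 1))

def jetNorm (c : ℕ → ℝ) (x : ℝ) : ℝ := max |Beval c x| |Beval (derivCoeff c) x|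

section PowerSeries

variable {c : ℕ → ℝ} {A ρ x : ℝ} {k : ℕ}

lemma summable_add_one_pow_mul_geometric (k : ℕ) (hρ : |ρ| < 1) :
    Summable fun n : ℕ => ((n : ℝ) + 1) ^ k * ρ ^ n := by
  simp_rw [add_pow, one_pow, mul_one, Finset.sum_mul]
  refine summable_sum fun i _ => ?_
  simpa only [mul_right_comm] using
    (summable_pow_mul_geometric_of_norm_lt_one i hρ).mul_right (k.choose i : ℝ)

lemma derivCoeff_mem_polyBounded (hc : c ∈ polyBounded A k) :
    derivCoeff c ∈ polyBounded (2 ^ k * A) (k + 1) := by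
  intro n
  have hA : 0 ≤ A := (abs_nonneg _).trans (by simpa using hc 0)
  have hn : (n : ℝ) + 1 + 1 ≤ 2 * ((n : ℝ) + 1) := by linarith [n.cast_nonneg (α := ℝ)]
  calc |derivCoeff c n| = ((n : ℝ) + 1) * |c (n + 1)| := by
        rw [derivCoeff, abs_mul, abs_of_pos (by positivity)]
    _ ≤ ((n : ℝ) + 1) * (A * ((n : ℝ) + 1 + 1) ^ k) := by
        gcongr
        exact_mod_cast hc (n + 1)
    _ ≤ ((n : ℝ) + 1) * (A * (2 * ((n : ℝ) + 1)) ^ k) := by gcongr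
    _ = 2 ^ k * A * ((n : ℝ) + 1) ^ (k + 1) := by rw [mul_pow]; ring

lemma norm_mul_pow_le (hc : c ∈ polyBounded A k) (hx : |x| ≤ ρ) (n : ℕ) :
    ‖c n * x ^ n‖ ≤ A * (((n : ℝ) + 1) ^ k * ρ ^ n) := by
  rw [Real.norm_eq_abs, abs_mul, abs_pow, ← mul_assoc]
  exact mul_le_mul (hc n) (pow_le_pow_left₀ (abs_nonneg x) hx n) (by positivity)
    ((abs_nonneg _).trans (hc n))

lemma abs_Beval_le (hc : c ∈ polyBounded A k) (hx : |x| ≤ ρ) (hρ : |ρ| < 1) :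
    |Beval c x| ≤ A * ∑' n : ℕ, ((n : ℝ) + 1) ^ k * ρ ^ n := by
  rw [← tsum_mul_left]
  exact tsum_of_norm_bounded ((summable_add_one_pow_mul_geometric k hρ).mul_left A).hasSum
    (norm_mul_pow_le hc hx)

lemma summable_mul_pow (hc : c ∈ polyBounded A k) (hx : |x| ≤ ρ) (hρ : |ρ| < 1) :
    Summable fun n => c n * x ^ n :=
  ((summable_add_one_pow_mul_geometric k hρ).mul_left A).of_norm_bounded (norm_mul_pow_le hc hx)

theorem hasDerivAt_Beval (hc : c ∈ polyBounded A k) (hx : |x| < 1) :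
    HasDerivAt (Beval c) (Beval (derivCoeff c) x) x := by
  obtain ⟨ρ, hxρ, hρ⟩ := exists_between hx
  have hρ₀ : 0 < ρ := (abs_nonneg x).trans_lt hxρ
  have hρ₁ : |ρ| < 1 := by rwa [abs_of_pos hρ₀]
  have hc' := derivCoeff_mem_polyBounded hc
  -- splitting off `c 0` makes the termwise derivatives exactly `derivCoeff c n * y ^ n`
  have htail :
      HasDerivAt (fun y => ∑' n, c (n + 1) * y ^ (n + 1)) (Beval (derivCoeff c) x) x := by
    refine hasDerivAt_tsum_of_isPreconnected (t := ball 0 ρ) (y₀ := 0)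
      (g := fun n y => c (n + 1) * y ^ (n + 1)) (g' := fun n y => derivCoeff c n * y ^ n)
      ((summable_add_one_pow_mul_geometric (k + 1) hρ₁).mul_left (2 ^ k * A)) isOpen_ball
      (convex_ball 0 ρ).isPreconnected (fun n y _ => ?_) (fun n y hy => ?_)
      (mem_ball_self hρ₀) (by simp) (mem_ball_zero_iff.2 hxρ)
    · refine ((hasDerivAt_pow (n + 1) y).const_mul (c (n + 1))).congr_deriv ?_
      simp only [derivCoeff, Nat.cast_add, Nat.cast_one, add_tsub_cancel_right]
      ring
    · exact norm_mul_pow_le hc' (mem_ball_zero_iff.1 hy).le n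
  have heq : (fun y => c 0 + ∑' n, c (n + 1) * y ^ (n + 1)) =ᶠ[𝓝 x] Beval c := by
    filter_upwards [isOpen_ball.mem_nhds (mem_ball_zero_iff.2 hxρ)] with y hy
    replace hy : |y| ≤ ρ := (mem_ball_zero_iff.1 hy).le
    rw [Beval, (summable_mul_pow hc hy hρ₁).tsum_eq_zero_add]
    simp
  exact (htail.const_add (c 0)).congr_of_eventuallyEq heq.symm

theorem continuousOn_Beval (hρ : |ρ| < 1) :
    ContinuousOn (fun p : (ℕ → ℝ) × ℝ => Beval p.1 p.2) (polyBounded A k ×ˢ closedBall 0 ρ) :=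
  continuousOn_tsum (f := fun (n : ℕ) (p : (ℕ → ℝ) × ℝ) => p.1 n * p.2 ^ n)
    (fun n => (by fun_prop : Continuous fun p : (ℕ → ℝ) × ℝ => p.1 n * p.2 ^ n).continuousOn)
    ((summable_add_one_pow_mul_geometric k hρ).mul_left A)
    fun n p hp => norm_mul_pow_le hp.1 (mem_closedBall_zero_iff.1 hp.2) n

theorem continuousOn_jetNorm (hρ : |ρ| < 1) :
    ContinuousOn (fun p : (ℕ → ℝ) × ℝ => jetNorm p.1 p.2)
      (polyBounded A k ×ˢ closedBall 0 ρ) := by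
  have hderiv : ContinuousOn (fun p : (ℕ → ℝ) × ℝ => Beval (derivCoeff p.1) p.2)
      (polyBounded A k ×ˢ closedBall 0 ρ) :=
    (continuousOn_Beval hρ).comp
      ((continuous_derivCoeff.comp continuous_fst).prodMk continuous_snd).continuousOn
      fun p hp => ⟨derivCoeff_mem_polyBounded hp.1, hp.2⟩
  exact (continuousOn_Beval hρ).abs.sup hderiv.abs

lemma jetNorm_pos (hc : c ∈ polyBounded A k) (hx : |x| < 1) (h : ¬ HasDoubleRootAt c x) :
    0 < jetNorm c x := by
  by_contra! hle
  rw [jetNorm, max_le_iff, abs_nonpos_iff, abs_nonpos_iff] at hle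
  exact h ⟨hle.1, (hasDerivAt_Beval hc hx).deriv ▸ hle.2⟩

end PowerSeries

section Transversality

variable {B K : Set (ℕ → ℝ)} {A ρ δ : ℝ} {k : ℕ}

theorem isTransvOn_of_le_jetNorm {a b : ℝ} (hB : B ⊆ polyBounded A k) (hρ : |ρ| < 1)
    (hJ : Icc a b ⊆ closedBall 0 ρ) (hδ : 0 < δ)
    (hBδ : ∀ c ∈ B, ∀ x ∈ Icc a b, δ ≤ jetNorm c x) : IsTransvOn (Icc a b) B := by
  obtain ⟨M, hM, hMf⟩ := exists_volume_abs_lt_lt_mul a b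
    (2 ^ (k + 1) * (2 ^ k * A) * ∑' n : ℕ, ((n : ℝ) + 1) ^ (k + 1 + 1) * ρ ^ n) δ hδ
  have hle : ∀ x ∈ Icc a b, |x| ≤ ρ := fun x hx => mem_closedBall_zero_iff.1 (hJ hx)
  have hlt : ∀ x ∈ Icc a b, |x| < 1 := fun x hx =>
    (hle x hx).trans_lt ((le_abs_self ρ).trans_lt hρ)
  refine ⟨M, hM, fun c hc => ?_⟩
  have hc' := derivCoeff_mem_polyBounded (hB hc)
  exact hMf _ _ _ (fun x hx => hasDerivAt_Beval (hB hc) (hlt x hx))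
    (fun x hx => hasDerivAt_Beval hc' (hlt x hx))
    (fun x hx => abs_Beval_le (derivCoeff_mem_polyBounded hc') (hle x hx) hρ) (hBδ c hc)

theorem exists_pos_le_max_jetNorm {J₁ J₂ : Set ℝ} (hK : IsCompact K) (hKA : K ⊆ polyBounded A k)
    (hJ₁ : IsCompact J₁) (hJ₂ : IsCompact J₂) (hρ : |ρ| < 1) (hJ₁ρ : J₁ ⊆ closedBall 0 ρ)
    (hJ₂ρ : J₂ ⊆ closedBall 0 ρ)
    (h : ∀ x ∈ J₁, ∀ y ∈ J₂, ∀ c ∈ K, ¬ (HasDoubleRootAt c x ∧ HasDoubleRootAt c y)) :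
    ∃ δ > 0, ∀ c ∈ K, ∀ x ∈ J₁, ∀ y ∈ J₂, δ ≤ max (jetNorm c x) (jetNorm c y) := by
  have hjet := continuousOn_jetNorm (A := A) (k := k) hρ
  have hcont : ContinuousOn
      (fun q : (ℕ → ℝ) × ℝ × ℝ => max (jetNorm q.1 q.2.1) (jetNorm q.1 q.2.2)) (K ×ˢ J₁ ×ˢ J₂) :=
    (hjet.comp (f := fun q : (ℕ → ℝ) × ℝ × ℝ => (q.1, q.2.1)) (by fun_prop)
      fun _ (hq : _ ∈ K ×ˢ J₁ ×ˢ J₂) => ⟨hKA hq.1, hJ₁ρ hq.2.1⟩).sup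
    (hjet.comp (f := fun q : (ℕ → ℝ) × ℝ × ℝ => (q.1, q.2.2)) (by fun_prop)
      fun _ (hq : _ ∈ K ×ˢ J₁ ×ˢ J₂) => ⟨hKA hq.1, hJ₂ρ hq.2.2⟩)
  have habs : ∀ x ∈ closedBall (0 : ℝ) ρ, |x| < 1 := fun x hx =>
    (mem_closedBall_zero_iff.1 hx).trans_lt ((le_abs_self ρ).trans_lt hρ)
  obtain ⟨δ, hδ, hδq⟩ := (hK.prod (hJ₁.prod hJ₂)).exists_forall_le' hcont (a := 0)
    fun ⟨c, x, y⟩ ⟨hc, hx, hy⟩ => by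
      rcases not_and_or.1 (h x hx y hy c hc) with hnx | hny
      · exact lt_max_of_lt_left (jetNorm_pos (hKA hc) (habs x (hJ₁ρ hx)) hnx)
      · exact lt_max_of_lt_right (jetNorm_pos (hKA hc) (habs y (hJ₂ρ hy)) hny)
  exact ⟨δ, hδ, fun c hc x hx y hy => hδq (c, x, y) ⟨hc, hx, hy⟩⟩

end Transversality

lemma memBtilde_iff {m : ℕ} {d : Fin m → ℝ} {c : ℕ → ℝ} :
    memBtilde m d c ↔ ∀ n, c n ∈ range d - range d := by
  simp [memBtilde, Set.mem_sub, eq_comm]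

lemma exists_polyBounded_of_memBtilde (m : ℕ) (d : Fin m → ℝ) :
    ∃ A, {c | memBtilde m d c} ⊆ polyBounded A 0 := by
  obtain ⟨A, hA⟩ := ((finite_range d).sub (finite_range d)).isBounded.exists_norm_le
  exact ⟨A, fun c hc n => by simpa using hA _ (memBtilde_iff.1 hc n)⟩

theorem isCompact_setOf_memB (m : ℕ) (d : Fin m → ℝ) : IsCompact {c | memB m d c} := by
  have hfin := (finite_range d).sub (finite_range d)
  have hB : {c | memB m d c} =
      univ.pi (fun _ => range d - range d) ∩ (fun c => c 0) ⁻¹' ((range d - range d) \ {0}) := by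
    ext c
    simp only [memB, memBtilde_iff, mem_ofPred_eq, mem_inter_iff, mem_univ_pi, mem_preimage,
      Set.mem_sdiff, mem_singleton_iff]
    exact ⟨fun h => ⟨h.1, h.1 0, h.2⟩, fun h => ⟨h.1, h.2.2⟩⟩
  rw [hB]
  exact (isCompact_univ_pi fun _ => hfin.isCompact).inter_right
    (hfin.sdiff.isClosed.preimage (continuous_apply 0))

/-- If `J₁, J₂ ⊂ (1/m, 1)` are closed intervals such that no `f ∈ 𝓑` has roots of multiplicity
`≥ 2` at some `γ ∈ J₁` and some `λ ∈ J₂` simultaneously, then `𝓑` can be partitioned into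
`𝓑′` and `𝓑″` such that `J₁` is a set of transversality for `𝓑′` and `J₂` for `𝓑″`. -/
theorem transversality_partition
    (m : ℕ) (d : Fin m → ℝ)
    (a1 b1 a2 b2 : ℝ) (hJ1 : Icc a1 b1 ⊆ Ioo (1 / (m : ℝ)) 1)
    (hJ2 : Icc a2 b2 ⊆ Ioo (1 / (m : ℝ)) 1)
    (hyp : ∀ g ∈ Icc a1 b1, ∀ l ∈ Icc a2 b2, ∀ c : ℕ → ℝ, memB m d c →
      ¬ (HasDoubleRootAt c g ∧ HasDoubleRootAt c l)) :
    ∃ B' B'' : Set (ℕ → ℝ),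
      B' ∪ B'' = {c | memB m d c} ∧ B' ∩ B'' = ∅ ∧
      IsTransvOn (Icc a1 b1) B' ∧ IsTransvOn (Icc a2 b2) B'' := by
  have hunit : Ioo (1 / (m : ℝ)) 1 ⊆ ball 0 1 := fun x hx => mem_ball_zero_iff.2 <|
    abs_lt.2 ⟨by linarith [hx.1, (by positivity : (0 : ℝ) ≤ 1 / m)], hx.2⟩
  obtain ⟨ρ, ⟨hρ₀, hρ₁⟩, hρ⟩ := exists_pos_lt_subset_ball one_pos
    (isClosed_Icc.union isClosed_Icc) (union_subset (hJ1.trans hunit) (hJ2.trans hunit))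
  have habs : |ρ| < 1 := by rwa [abs_of_pos hρ₀]
  have hJ1ρ : Icc a1 b1 ⊆ closedBall 0 ρ :=
    subset_union_left.trans (hρ.trans ball_subset_closedBall)
  have hJ2ρ : Icc a2 b2 ⊆ closedBall 0 ρ :=
    subset_union_right.trans (hρ.trans ball_subset_closedBall)
  obtain ⟨A, hA⟩ := exists_polyBounded_of_memBtilde m d
  have hBA : {c | memB m d c} ⊆ polyBounded A 0 := fun c hc => hA hc.1
  obtain ⟨δ, hδ, hδJ⟩ := exists_pos_le_max_jetNorm (isCompact_setOf_memB m d) hBA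
    isCompact_Icc isCompact_Icc habs hJ1ρ hJ2ρ hyp
  let good : Set (ℕ → ℝ) := {c | ∀ x ∈ Icc a1 b1, δ ≤ jetNorm c x}
  refine ⟨{c | memB m d c} ∩ good, {c | memB m d c} \ good, inter_union_sdiff _ _,
    disjoint_iff_inter_eq_empty.1 disjoint_sdiff_inter.symm,
    isTransvOn_of_le_jetNorm (inter_subset_left.trans hBA) habs hJ1ρ hδ fun c hc => hc.2,
    isTransvOn_of_le_jetNorm (sdiff_subset.trans hBA) habs hJ2ρ hδ ?_⟩
  rintro c ⟨hc, hbad⟩ y hy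
  obtain ⟨x, hx, hlt⟩ := not_forall₂.1 hbad
  exact (le_max_iff.1 (hδJ c hc x hx y hy)).resolve_left hlt
end
end

section
/- Let f ∈ 𝓑 and suppose 0 < α_1 ≤ α_2 ≤ … ≤ α_k are roots of f, counted with multiplicity. Then ∏_{i=1}^k α_i ≥ (1 + 1/k)^{−k/2} (χ²k + 1)^{−1/2}. -/
open MeasureTheory Filter Set
open scoped ENNReal Topology

noncomputable section

/-- `χ = max_{i,j}|dᵢ − dⱼ| / min_{i≠j}|dᵢ − dⱼ|`. -/
def chi (m : ℕ) (d : Fin m → ℝ) : ℝ :=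
  sSup {x | ∃ i j, x = |d i - d j|} / sInf {x | ∃ i j : Fin m, i ≠ j ∧ x = |d i - d j|}

/-!
Write `f(z) = ∑ cₙ zⁿ` with `|cₙ| ≤ Δ`. For `0 < r < 1` the sum `∑ cₙ² r²ⁿ`, the mean of `|f|²`
on the circle `|z| = r`, is at most `c₀² + Δ² r² / (1 - r²)`. If `f = (z - a) g` with
`0 < |a| < 1`, then `f̃ = (z - r² / a) g` satisfies `|f̃| = |r / a| |f|` on `|z| = r` and
`f̃(0) = (r / a)² f(0)`, and keeps the other zeros of `f` with their multiplicities, so the ratio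
`f(0)² / mean |f|²` grows by `(r / a)²`. Inducting over the zeros gives the Jensen-type inequality
`c₀² ∏ (r / a)² ≤ ∑ cₙ² r²ⁿ`. For `r² = k / (k + 1)` and the zeros `αᵢ < r` this yields
`∏_{αᵢ < r} (r / αᵢ)² ≤ 1 + χ² k`, since `Δ / |c₀| ≤ χ`, while each other `αᵢ` is at least `r`.
-/

def mulXSub (a : ℝ) (q : ℕ → ℝ) : ℕ → ℝ
  | 0 => -a * q 0
  | n + 1 => q n - a * q (n + 1)

def divXSub (c : ℕ → ℝ) (a : ℝ) (n : ℕ) : ℝ := ∑' i, c (n + 1 + i) * a ^ i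

section PowerSeries

variable {c q : ℕ → ℝ} {C a x : ℝ}

lemma summable_mul_pow_of_abs_le (hc : ∀ n, |c n| ≤ C) (hx : |x| < 1) :
    Summable fun n => c n * x ^ n :=
  .of_norm_bounded ((summable_geometric_of_lt_one (abs_nonneg x) hx).mul_left C) fun n => by
    rw [Real.norm_eq_abs, abs_mul, abs_pow]
    exact mul_le_mul_of_nonneg_right (hc n) (by positivity)

lemma abs_mulXSub_le (hq : ∀ n, |q n| ≤ C) : ∀ n, |mulXSub a q n| ≤ (1 + |a|) * C
  | 0 => by
    have := (abs_nonneg _).trans (hq 0)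
    rw [mulXSub, abs_mul, abs_neg]
    nlinarith [hq 0, abs_nonneg a]
  | n + 1 => by
    rw [mulXSub]
    refine (abs_sub _ _).trans ?_
    rw [abs_mul, add_mul, one_mul]
    exact add_le_add (hq n) (mul_le_mul_of_nonneg_left (hq _) (abs_nonneg a))

lemma abs_divXSub_le (hc : ∀ n, |c n| ≤ C) (ha : |a| < 1) (n : ℕ) :
    |divXSub c a n| ≤ C / (1 - |a|) := by
  rw [← Real.norm_eq_abs, div_eq_mul_inv]
  refine tsum_of_norm_bounded ((hasSum_geometric_of_lt_one (abs_nonneg a) ha).mul_left C)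
    fun i => ?_
  rw [Real.norm_eq_abs, abs_mul, abs_pow]
  exact mul_le_mul_of_nonneg_right (hc _) (by positivity)

lemma tsum_mul_pow_eq_add (hc : ∀ n, |c n| ≤ C) (ha : |a| < 1) (m : ℕ) :
    ∑' i, c (m + i) * a ^ i = c m + a * ∑' i, c (m + 1 + i) * a ^ i := by
  rw [(summable_mul_pow_of_abs_le (fun i => hc (m + i)) ha).tsum_eq_zero_add, ← tsum_mul_left]
  congr 1
  · simp
  · exact tsum_congr fun i => by rw [show m + (i + 1) = m + 1 + i by omega]; ring

lemma mulXSub_divXSub (hc : ∀ n, |c n| ≤ C) (ha : |a| < 1) (hroot : Beval c a = 0) :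
    mulXSub a (divXSub c a) = c := by
  have hstep := tsum_mul_pow_eq_add hc ha
  funext n
  cases n with
  | zero =>
    have h0 : Beval c a = c 0 + a * divXSub c a 0 := by
      rw [Beval, divXSub]; simpa using hstep 0
    rw [mulXSub]
    linarith
  | succ n =>
    rw [mulXSub, divXSub, divXSub, hstep (n + 1)]
    ring

lemma Beval_mulXSub (hq : ∀ n, |q n| ≤ C) (hx : |x| < 1) :
    Beval (mulXSub a q) x = (x - a) * Beval q x := by
  have hs := summable_mul_pow_of_abs_le hq hx
  have hs' : Summable fun n => q (n + 1) * x ^ (n + 1) := (summable_nat_add_iff 1).mpr hs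
  rw [Beval, (summable_mul_pow_of_abs_le (abs_mulXSub_le (a := a) hq) hx).tsum_eq_zero_add,
    Beval, hs.tsum_eq_zero_add]
  have hterm : ∀ n, mulXSub a q (n + 1) * x ^ (n + 1)
      = x * (q n * x ^ n) - a * (q (n + 1) * x ^ (n + 1)) := fun n => by
    rw [mulXSub, pow_succ]; ring
  rw [tsum_congr hterm, (hs.mul_left x).tsum_sub (hs'.mul_left a), tsum_mul_left, tsum_mul_left,
    hs.tsum_eq_zero_add, mulXSub]
  ring

lemma analyticAt_Beval (hc : ∀ n, |c n| ≤ C) (hx : |x| < 1) : AnalyticAt ℝ (Beval c) x := by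
  set p := FormalMultilinearSeries.ofScalars ℝ c
  have hp : p.sum = Beval c := by
    rw [← FormalMultilinearSeries.ofScalarsSum, FormalMultilinearSeries.ofScalarsSum_eq_tsum]
    rfl
  have hrad : 1 ≤ p.radius := ENNReal.le_of_forall_nnreal_lt fun ρ hρ => by
    refine p.le_radius_of_bound C fun n => ?_
    rw [FormalMultilinearSeries.ofScalars_norm, Real.norm_eq_abs]
    exact (mul_le_of_le_one_right (abs_nonneg _)
      (pow_le_one₀ ρ.coe_nonneg (by exact_mod_cast hρ.le))).trans (hc n)
  refine hp ▸ (p.hasFPowerSeriesOnBall (zero_lt_one.trans_le hrad)).analyticAt_of_mem ?_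
  rw [Metric.mem_eball, edist_zero_right, enorm_eq_nnnorm]
  exact lt_of_lt_of_le (by exact_mod_cast hx) hrad

lemma analyticOrderAt_Beval_mulXSub (hq : ∀ n, |q n| ≤ C) (hx : |x| < 1) :
    analyticOrderAt (Beval (mulXSub a q)) x
      = analyticOrderAt (· - a) x + analyticOrderAt (Beval q) x := by
  have hball : Metric.ball (0 : ℝ) 1 ∈ 𝓝 x :=
    Metric.isOpen_ball.mem_nhds (by rwa [Metric.mem_ball, dist_zero_right])
  have hEq : Beval (mulXSub a q) =ᶠ[𝓝 x] (· - a) * Beval q :=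
    Filter.eventually_of_mem hball fun y hy => by
      rw [Metric.mem_ball, dist_zero_right, Real.norm_eq_abs] at hy
      exact Beval_mulXSub hq hy
  rw [analyticOrderAt_congr hEq, analyticOrderAt_mul (by fun_prop) (analyticAt_Beval hq hx)]

end PowerSeries

def weightedSqNorm (r : ℝ) (c : ℕ → ℝ) : ℝ := ∑' n, c n ^ 2 * (r ^ 2) ^ n

section WeightedSqNorm

variable {c q : ℕ → ℝ} {C a r : ℝ}

lemma abs_sq_lt_one (hr : |r| < 1) : |r ^ 2| < 1 := by
  rw [abs_pow]
  exact pow_lt_one₀ (abs_nonneg r) hr two_ne_zero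

lemma summable_sq_mul_pow (hc : ∀ n, |c n| ≤ C) (hr : |r| < 1) :
    Summable fun n => c n ^ 2 * (r ^ 2) ^ n :=
  summable_mul_pow_of_abs_le (C := C ^ 2)
    (fun n => by rw [abs_pow]; exact pow_le_pow_left₀ (abs_nonneg _) (hc n) 2) (abs_sq_lt_one hr)

lemma sq_le_weightedSqNorm (hc : ∀ n, |c n| ≤ C) (hr : |r| < 1) :
    c 0 ^ 2 ≤ weightedSqNorm r c := by
  simpa [weightedSqNorm] using (summable_sq_mul_pow hc hr).le_tsum 0 fun n _ => by positivity

lemma weightedSqNorm_le (hc : ∀ n, |c n| ≤ C) (hr : |r| < 1) :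
    weightedSqNorm r c ≤ c 0 ^ 2 + C ^ 2 * (r ^ 2 / (1 - r ^ 2)) := by
  have hr2 : r ^ 2 < 1 := (le_abs_self _).trans_lt (abs_sq_lt_one hr)
  have hgeom : HasSum (fun n => C ^ 2 * r ^ 2 * (r ^ 2) ^ n) (C ^ 2 * r ^ 2 * (1 - r ^ 2)⁻¹) :=
    (hasSum_geometric_of_lt_one (by positivity) hr2).mul_left _
  rw [weightedSqNorm, (summable_sq_mul_pow hc hr).tsum_eq_zero_add, pow_zero, mul_one,
    mul_div_assoc', div_eq_mul_inv, ← hgeom.tsum_eq]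
  refine add_le_add_right (((summable_nat_add_iff 1).mpr (summable_sq_mul_pow hc hr)).tsum_le_tsum
    (fun n => ?_) hgeom.summable) _
  rw [pow_succ (r ^ 2) n, mul_comm ((r ^ 2) ^ n), ← mul_assoc]
  have hsq : c (n + 1) ^ 2 ≤ C ^ 2 := sq_le_sq' (abs_le.mp (hc _)).1 (abs_le.mp (hc _)).2
  gcongr

lemma weightedSqNorm_mulXSub (hq : ∀ n, |q n| ≤ C) (hr : |r| < 1) :
    weightedSqNorm r (mulXSub a q)
      = (r ^ 2 + a ^ 2) * weightedSqNorm r q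
        - 2 * a * r ^ 2 * ∑' n, q n * q (n + 1) * (r ^ 2) ^ n := by
  have hS := summable_sq_mul_pow hq hr
  have hS' : Summable fun n => q (n + 1) ^ 2 * (r ^ 2) ^ (n + 1) := (summable_nat_add_iff 1).mpr hS
  have hX : Summable fun n => q n * q (n + 1) * (r ^ 2) ^ n :=
    summable_mul_pow_of_abs_le (C := C * C) (fun n => by
      rw [abs_mul]; exact mul_le_mul (hq _) (hq _) (abs_nonneg _) ((abs_nonneg _).trans (hq 0)))
      (abs_sq_lt_one hr)
  have hterm : ∀ n, mulXSub a q (n + 1) ^ 2 * (r ^ 2) ^ (n + 1)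
      = r ^ 2 * (q n ^ 2 * (r ^ 2) ^ n) - 2 * a * r ^ 2 * (q n * q (n + 1) * (r ^ 2) ^ n)
        + a ^ 2 * (q (n + 1) ^ 2 * (r ^ 2) ^ (n + 1)) := fun n => by
    rw [mulXSub, pow_succ (r ^ 2) n]; ring
  rw [weightedSqNorm, (summable_sq_mul_pow (abs_mulXSub_le (a := a) hq) hr).tsum_eq_zero_add,
    tsum_congr hterm, ((hS.mul_left _).sub (hX.mul_left _)).tsum_add (hS'.mul_left _),
    (hS.mul_left _).tsum_sub (hX.mul_left _), tsum_mul_left, tsum_mul_left, tsum_mul_left,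
    weightedSqNorm, hS.tsum_eq_zero_add, mulXSub]
  ring

/-- On the circle `|z| = r` one has `|z - a| = |a / r| * |z - r² / a|`. -/
lemma weightedSqNorm_mulXSub_eq_reflect (hq : ∀ n, |q n| ≤ C) (hr : |r| < 1) (hr0 : r ≠ 0)
    (ha : a ≠ 0) :
    weightedSqNorm r (mulXSub a q) = (a / r) ^ 2 * weightedSqNorm r (mulXSub (r ^ 2 / a) q) := by
  rw [weightedSqNorm_mulXSub hq hr, weightedSqNorm_mulXSub hq hr]
  field_simp
  ring

end WeightedSqNorm

theorem sq_mul_prod_le_weightedSqNorm {r : ℝ} (hr : |r| < 1) (hr0 : r ≠ 0) (s : Multiset ℝ)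
    (hs : ∀ a ∈ s, a ≠ 0 ∧ |a| < 1) {c : ℕ → ℝ} {C : ℝ} (hc : ∀ n, |c n| ≤ C)
    (hord : ∀ a ∈ s, (s.count a : ℕ∞) ≤ analyticOrderAt (Beval c) a) :
    c 0 ^ 2 * (s.map fun a => (r / a) ^ 2).prod ≤ weightedSqNorm r c := by
  induction s using Multiset.induction_on generalizing c C with
  | empty => simpa using sq_le_weightedSqNorm hc hr
  | cons a s ih =>
    obtain ⟨ha0, ha1⟩ := hs a (Multiset.mem_cons_self a s)
    have hroot : Beval c a = 0 := by
      refine apply_eq_zero_of_analyticOrderAt_ne_zero (pos_iff_ne_zero.mp ?_)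
      refine lt_of_lt_of_le ?_ (hord a (Multiset.mem_cons_self a s))
      exact_mod_cast Multiset.count_pos.mpr (Multiset.mem_cons_self a s)
    set q := divXSub c a
    have hq := abs_divXSub_le hc ha1
    have hcq : mulXSub a q = c := mulXSub_divXSub hc ha1 hroot
    set c' := mulXSub (r ^ 2 / a) q
    have hord' : ∀ b ∈ s, (s.count b : ℕ∞) ≤ analyticOrderAt (Beval c') b := by
      intro b hb
      have hb1 := (hs b (Multiset.mem_cons_of_mem hb)).2
      have h := hord b (Multiset.mem_cons_of_mem hb)
      rw [Multiset.count_cons, ← hcq, analyticOrderAt_Beval_mulXSub hq hb1] at h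
      rw [analyticOrderAt_Beval_mulXSub hq hb1]
      refine le_add_left ?_
      by_cases hba : b = a
      · subst hba
        rw [if_pos rfl, analyticOrderAt_id_sub_const_self, Nat.cast_add, Nat.cast_one,
          add_comm] at h
        exact (ENat.add_le_add_iff_left ENat.one_ne_top).mp h
      · rwa [if_neg hba, analyticOrderAt_id_sub_const_of_ne hba, add_zero, zero_add] at h
    have ih' := ih (fun b hb => hs b (Multiset.mem_cons_of_mem hb)) (abs_mulXSub_le hq) hord'
    calc c 0 ^ 2 * ((a ::ₘ s).map fun a => (r / a) ^ 2).prod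
        = (a / r) ^ 2 * (c' 0 ^ 2 * (s.map fun a => (r / a) ^ 2).prod) := by
          rw [Multiset.map_cons, Multiset.prod_cons, ← hcq]
          simp only [c', mulXSub]
          field_simp
      _ ≤ (a / r) ^ 2 * weightedSqNorm r c' := by gcongr
      _ = weightedSqNorm r c := by
          rw [← weightedSqNorm_mulXSub_eq_reflect hq hr hr0 ha0, hcq]

theorem prod_sq_div_le_of_abs_le {r : ℝ} (hr : |r| < 1) (hr0 : r ≠ 0) (s : Multiset ℝ)
    (hs : ∀ a ∈ s, a ≠ 0 ∧ |a| < 1) {c : ℕ → ℝ} {C : ℝ} (hc : ∀ n, |c n| ≤ C) (hc0 : c 0 ≠ 0)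
    (hord : ∀ a ∈ s, (s.count a : ℕ∞) ≤ analyticOrderAt (Beval c) a) :
    (s.map fun a => (r / a) ^ 2).prod ≤ (C / |c 0|) ^ 2 * (r ^ 2 / (1 - r ^ 2)) + 1 := by
  have hc0' : 0 < c 0 ^ 2 := by positivity
  calc _ ≤ (c 0 ^ 2 + C ^ 2 * (r ^ 2 / (1 - r ^ 2))) / c 0 ^ 2 :=
        (le_div_iff₀' hc0').mpr ((sq_mul_prod_le_weightedSqNorm hr hr0 s hs hc hord).trans
          (weightedSqNorm_le hc hr))
    _ = _ := by rw [div_pow, sq_abs, add_div, div_self hc0'.ne', div_mul_eq_mul_div, add_comm]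

lemma count_map_le_analyticOrderAt {𝕜 E ι : Type*} [NontriviallyNormedField 𝕜] [CharZero 𝕜]
    [DecidableEq 𝕜] [NormedAddCommGroup E] [NormedSpace 𝕜 E] [CompleteSpace E] [Fintype ι]
    {f : 𝕜 → E} {α : ι → 𝕜} (S : Finset ι) (hf : ∀ i ∈ S, AnalyticAt 𝕜 f (α i))
    (hroots : ∀ i, ∀ j < (Finset.univ.filter fun i' => α i' = α i).card,
      iteratedDeriv j f (α i) = 0) :
    ∀ a ∈ S.val.map α, ((S.val.map α).count a : ℕ∞) ≤ analyticOrderAt f a := by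
  refine Multiset.forall_mem_map_iff.mpr fun i hi => ?_
  refine le_trans ?_ ((natCast_le_analyticOrderAt_iff_iteratedDeriv_eq_zero (hf i hi)).mpr
    (hroots i))
  rw [Multiset.count_map, Finset.card_def, Finset.filter_val]
  simp only [eq_comm (a := α i)]
  exact_mod_cast Multiset.card_le_card
    (Multiset.filter_le_filter _ (Finset.val_le_iff.mpr (Finset.subset_univ S)))

section DigitSet

variable {m : ℕ} {d : Fin m → ℝ} {c : ℕ → ℝ}

lemma abs_sub_le_sSup (d : Fin m → ℝ) (i j : Fin m) :
    |d i - d j| ≤ sSup {x | ∃ i j, x = |d i - d j|} :=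
  le_csSup ((Set.finite_range fun p : Fin m × Fin m => |d p.1 - d p.2|).subset
    (by rintro _ ⟨i, j, rfl⟩; exact ⟨(i, j), rfl⟩)).bddAbove ⟨i, j, rfl⟩

lemma memBtilde.abs_le (hc : memBtilde m d c) (n : ℕ) :
    |c n| ≤ sSup {x | ∃ i j, x = |d i - d j|} := by
  obtain ⟨i, j, hij⟩ := hc n
  exact hij ▸ abs_sub_le_sSup d i j

lemma memB.sSup_div_abs_le_chi (hd : Function.Injective d) (hc : memB m d c) :
    sSup {x | ∃ i j, x = |d i - d j|} / |c 0| ≤ chi m d := by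
  set S := {x | ∃ i j : Fin m, i ≠ j ∧ x = |d i - d j|}
  have hS : S.Finite := (Set.finite_range fun p : Fin m × Fin m => |d p.1 - d p.2|).subset
    (by rintro _ ⟨i, j, -, rfl⟩; exact ⟨(i, j), rfl⟩)
  obtain ⟨i, j, hij⟩ := hc.1 0
  have hc0S : |c 0| ∈ S := ⟨i, j, by rintro rfl; exact hc.2 (by simpa using hij), by rw [hij]⟩
  have hδ : 0 < sInf S := by
    obtain ⟨i', j', hne, he⟩ := Set.Nonempty.csInf_mem ⟨_, hc0S⟩ hS
    rw [he]
    exact abs_pos.mpr (sub_ne_zero.mpr (hd.ne hne))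
  exact div_le_div_of_nonneg_left ((abs_nonneg _).trans (hc.1.abs_le 0)) hδ
    (csInf_le hS.bddBelow hc0S)

end DigitSet

lemma pow_card_le_sqrt_mul_prod {ι : Type*} [Fintype ι] {α : ι → ℝ} (hα : ∀ i, 0 < α i)
    {r B : ℝ} (hr : 0 ≤ r) (h : ∏ i ∈ Finset.univ.filter (α · < r), (r / α i) ^ 2 ≤ B) :
    r ^ Fintype.card ι ≤ √B * ∏ i, α i := by
  have hsplit : ∏ i, r / α i ≤ ∏ i ∈ Finset.univ.filter (α · < r), r / α i := by
    rw [← Finset.prod_filter_mul_prod_filter_not Finset.univ (α · < r)]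
    refine mul_le_of_le_one_right (Finset.prod_nonneg fun i _ => by have := hα i; positivity)
      (Finset.prod_le_one (fun i _ => by have := hα i; positivity) fun i hi => ?_)
    exact div_le_one_of_le₀ (not_lt.mp (Finset.mem_filter.mp hi).2) (hα i).le
  have hsqrt := Real.le_sqrt_of_sq_le ((Finset.prod_pow _ 2 _).symm.trans_le h)
  rw [Finset.prod_div_distrib, Finset.prod_const, Finset.card_univ,
    div_le_iff₀ (Finset.prod_pos fun i _ => hα i)] at hsplit
  exact hsplit.trans (mul_le_mul_of_nonneg_right hsqrt (Finset.prod_nonneg fun i _ => (hα i).le))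

lemma one_add_one_div_rpow_eq {k : ℕ} (hk : 0 < k) :
    (1 + 1 / (k : ℝ)) ^ (-(k : ℝ) / 2) = √((k : ℝ) / (k + 1)) ^ k := by
  rw [show 1 + 1 / (k : ℝ) = ((k : ℝ) / (k + 1))⁻¹ by field_simp, Real.inv_rpow (by positivity),
    ← Real.rpow_neg (by positivity), neg_div, neg_neg, Real.sqrt_eq_rpow, ← Real.rpow_natCast,
    ← Real.rpow_mul (by positivity)]
  ring_nf

/-- If `0 < α₁ ≤ … ≤ α_k` are roots of `f ∈ 𝓑` counted with multiplicity
(multiplicity expressed through vanishing of iterated derivatives), then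
`∏ αᵢ ≥ (1 + 1/k)^{−k/2} (χ²k + 1)^{−1/2}`. -/
theorem product_of_roots_lower_bound
    (m : ℕ) (d : Fin m → ℝ) (hd : StrictMono d)
    (c : ℕ → ℝ) (hc : memB m d c)
    (k : ℕ) (hk : 0 < k) (α : Fin k → ℝ)
    (hpos : ∀ i, 0 < α i)
    (hroots : ∀ i : Fin k, ∀ j : ℕ,
      j < (Finset.univ.filter fun i' : Fin k => α i' = α i).card →
        iteratedDeriv j (Beval c) (α i) = 0) :
    (1 + 1 / (k : ℝ)) ^ (-(k : ℝ) / 2) * (chi m d ^ 2 * (k : ℝ) + 1) ^ (-(1 : ℝ) / 2)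
      ≤ ∏ i, α i := by
  have hΔ := hc.1.abs_le
  set r := √((k : ℝ) / (k + 1))
  have hr2 : r ^ 2 = k / (k + 1) := Real.sq_sqrt (by positivity)
  have hr0 : 0 < r := Real.sqrt_pos.mpr (by positivity)
  have hr1 : r < 1 := (sq_lt_one_iff₀ hr0.le).mp (by rw [hr2, div_lt_one (by positivity)]; linarith)
  set S := Finset.univ.filter (α · < r)
  have hS : ∀ i ∈ S, α i ≠ 0 ∧ |α i| < 1 := fun i hi =>
    ⟨(hpos i).ne', abs_lt.mpr ⟨by linarith [hpos i], (Finset.mem_filter.mp hi).2.trans hr1⟩⟩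
  have hB : ∏ i ∈ S, (r / α i) ^ 2 ≤ chi m d ^ 2 * k + 1 := by
    have h := prod_sq_div_le_of_abs_le (abs_lt.mpr ⟨by linarith, hr1⟩) hr0.ne' (S.val.map α)
      (Multiset.forall_mem_map_iff.mpr hS) hΔ hc.2
      (count_map_le_analyticOrderAt S (fun i hi => analyticAt_Beval hΔ (hS i hi).2) hroots)
    rw [Multiset.map_map, Finset.prod_map_val, hr2,
      show (k : ℝ) / (k + 1) / (1 - k / (k + 1)) = k by field_simp; ring] at h
    refine h.trans ?_
    have hΔ0 := (abs_nonneg _).trans (hΔ 0)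
    gcongr
    exact hc.sSup_div_abs_le_chi hd.injective
  have hprod := pow_card_le_sqrt_mul_prod hpos hr0.le hB
  rw [Fintype.card_fin] at hprod
  rw [one_add_one_div_rpow_eq hk, neg_div, Real.rpow_neg (by positivity), ← Real.sqrt_eq_rpow,
    ← div_eq_mul_inv, div_le_iff₀' (Real.sqrt_pos.mpr (by positivity))]
  exact hprod
end
end

section
/- Let ν be a finite Borel measure on ℝ that is absolutely continuous with respect to Lebesgue measure, with density f ∈ L²(ℝ). Then lim_{r→0⁺} (1/r)·(ν×ν){(x,y) ∈ ℝ² : |x−y| ≤ r} = 2‖f‖_{L²}². -/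
/-!
Write `F = ofReal ∘ f`. Substituting `y = x - t`, the `ν × ν`-mass of `{(x, y) : x - y ∈ s}` is
`∫_s ∫ F x F (x - t) dx dt`, i.e. the integral over `s` of the autocorrelation
`t ↦ ∫ f x f (x - t) dx` of the density. This is the `L²` inner product of `f` with its translate,
hence continuous in `t` because translation is continuous on `L²`. So
`(ν × ν){|x - y| ≤ r} = ∫_{-r}^{r} (autocorrelation) dt`, and by the fundamental theorem of calculus
dividing by `r` gives in the limit twice the value at `t = 0`, which is `‖f‖₂²`.
-/

open MeasureTheory Filter Set
open scoped ENNReal Topology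

namespace MeasureTheory

noncomputable def autocorrelation {G : Type*} [Sub G] [MeasurableSpace G] (μ : Measure G) (f : G → ℝ)
    (t : G) : ℝ :=
  ∫ x, f x * f (x - t) ∂μ

section AddGroup

variable {G : Type*} [AddGroup G] [MeasurableSpace G]

section Reflection

variable [MeasurableNeg G]

lemma Measure.prod_preimage_sub_eq_conv_map_neg [MeasurableAdd₂ G] (ν ν' : Measure G)
    [SFinite ν] [SFinite ν'] {s : Set G} (hs : MeasurableSet s) :
    (ν.prod ν') ((fun p : G × G => p.1 - p.2) ⁻¹' s) = (ν ∗ ν'.map Neg.neg) s := by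
  rw [Measure.conv, ← Measure.map_id (μ := ν),
    Measure.map_prod_map _ _ measurable_id measurable_neg,
    Measure.map_map (by fun_prop) (by fun_prop), Measure.map_apply (by fun_prop) hs,
    Measure.map_id]
  congr 1
  ext p
  simp [sub_eq_add_neg]

lemma Measure.map_neg_withDensity (μ : Measure G) [μ.IsNegInvariant] {F : G → ℝ≥0∞}
    (hF : AEMeasurable F μ) :
    (μ.withDensity F).map Neg.neg = μ.withDensity (fun x => F (-x)) := by
  refine ext_of_lintegral _ fun φ hφ => ?_
  have hF_neg : AEMeasurable (fun x => F (-x)) μ :=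
    hF.comp_quasiMeasurePreserving (Measure.measurePreserving_neg μ).quasiMeasurePreserving
  rw [lintegral_map hφ measurable_neg, lintegral_withDensity_eq_lintegral_mul₀ hF (by fun_prop),
    lintegral_withDensity_eq_lintegral_mul₀ hF_neg hφ.aemeasurable, ← lintegral_neg_eq_self]
  simp [mul_comm]

end Reflection

variable [MeasurableAdd G] {μ : Measure G} [μ.IsAddRightInvariant] {f : G → ℝ}

lemma ae_nonneg_mul_sub (hf0 : 0 ≤ᵐ[μ] f) (t : G) : 0 ≤ᵐ[μ] fun x => f x * f (x - t) := by
  have hft0 : 0 ≤ᵐ[μ] fun x => f (x - t) :=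
    (measurePreserving_sub_right μ t).quasiMeasurePreserving.ae hf0
  filter_upwards [hf0, hft0] with x hx hxt
  exact mul_nonneg hx hxt

lemma autocorrelation_nonneg (hf0 : 0 ≤ᵐ[μ] f) (t : G) : 0 ≤ autocorrelation μ f t :=
  integral_nonneg_of_ae (ae_nonneg_mul_sub hf0 t)

lemma lintegral_ofReal_mul_ofReal_sub (hf : MemLp f 2 μ) (hf0 : 0 ≤ᵐ[μ] f) (t : G) :
    ∫⁻ x, ENNReal.ofReal (f x) * ENNReal.ofReal (f (x - t)) ∂μ
      = ENNReal.ofReal (autocorrelation μ f t) := by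
  have hint : Integrable (fun x => f x * f (x - t)) μ :=
    hf.integrable_mul (hf.comp_measurePreserving (measurePreserving_sub_right μ t))
  rw [autocorrelation, ofReal_integral_eq_lintegral_ofReal hint (ae_nonneg_mul_sub hf0 t)]
  refine lintegral_congr_ae ?_
  filter_upwards [hf0] with x hx
  rw [ENNReal.ofReal_mul hx]

end AddGroup

section Topological

variable {G : Type*} [TopologicalSpace G] [AddGroup G] [IsTopologicalAddGroup G]
  [MeasurableSpace G] [BorelSpace G] {μ : Measure G} [μ.IsAddRightInvariant]
  [μ.InnerRegularCompactLTTop] [IsLocallyFiniteMeasure μ] {f : G → ℝ}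

theorem MemLp.continuous_autocorrelation (hf : MemLp f 2 μ) :
    Continuous (autocorrelation μ f) := by
  let F : Lp ℝ 2 μ := hf.toLp f
  let shift : G → C(G, G) := fun t => ⟨fun x => x - t, by fun_prop⟩
  have hshift : ∀ t, MeasurePreserving (shift t) μ μ := fun t => measurePreserving_sub_right μ t
  have hcont : Continuous shift :=
    ContinuousMap.continuous_of_continuous_uncurry _ (continuous_snd.sub continuous_fst)
  have hinner : Continuous fun t => inner ℝ F (Lp.compMeasurePreserving (shift t) (hshift t) F) :=
    continuous_const.inner (continuous_const.compMeasurePreservingLp hcont hshift (by norm_num))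
  convert hinner using 2 with t
  have hF : (F : G → ℝ) =ᵐ[μ] f := hf.coeFn_toLp
  have hFt : (Lp.compMeasurePreserving (shift t) (hshift t) F : G → ℝ) =ᵐ[μ]
      fun x => f (x - t) :=
    (Lp.coeFn_compMeasurePreserving F (hshift t)).trans
      ((hshift t).quasiMeasurePreserving.ae_eq_comp hF)
  rw [L2.inner_def, autocorrelation]
  refine integral_congr_ae ?_
  filter_upwards [hF, hFt] with x hx hxt
  rw [RCLike.inner_apply, conj_trivial, hx, hxt, mul_comm]

end Topological

section AddCommGroup

variable {G : Type*} [AddCommGroup G] [MeasurableSpace G] [MeasurableNeg G] [MeasurableAdd₂ G]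
  {μ : Measure G} [SFinite μ] [μ.IsAddLeftInvariant] [μ.IsNegInvariant]

lemma withDensity_prod_withDensity_preimage_sub {F : G → ℝ≥0∞} (hF : AEMeasurable F μ)
    {s : Set G} (hs : MeasurableSet s) :
    ((μ.withDensity F).prod (μ.withDensity F)) ((fun p : G × G => p.1 - p.2) ⁻¹' s)
      = ∫⁻ t in s, ∫⁻ x, F x * F (x - t) ∂μ ∂μ := by
  have hF_neg : AEMeasurable (fun x => F (-x)) μ :=
    hF.comp_quasiMeasurePreserving (Measure.measurePreserving_neg μ).quasiMeasurePreserving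
  rw [Measure.prod_preimage_sub_eq_conv_map_neg _ _ hs, Measure.map_neg_withDensity μ hF,
    conv_withDensity_eq_mlconvolution₀ hF hF_neg, withDensity_apply _ hs]
  simp [lconvolution_def, neg_add_eq_sub]

variable [TopologicalSpace G] [IsTopologicalAddGroup G] [BorelSpace G]
  [μ.InnerRegularCompactLTTop] [IsLocallyFiniteMeasure μ] {f : G → ℝ}

theorem MemLp.withDensity_ofReal_prod_preimage_sub (hf : MemLp f 2 μ)
    (hf0 : 0 ≤ᵐ[μ] f) {s : Set G} (hs : IsCompact s) (hs_meas : MeasurableSet s) :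
    ((μ.withDensity fun x => ENNReal.ofReal (f x)).prod
        (μ.withDensity fun x => ENNReal.ofReal (f x))) ((fun p : G × G => p.1 - p.2) ⁻¹' s)
      = ENNReal.ofReal (∫ t in s, autocorrelation μ f t ∂μ) := by
  rw [withDensity_prod_withDensity_preimage_sub hf.aestronglyMeasurable.aemeasurable.ennreal_ofReal
    hs_meas]
  simp_rw [lintegral_ofReal_mul_ofReal_sub hf hf0]
  exact (ofReal_integral_eq_lintegral_ofReal
    (hf.continuous_autocorrelation.continuousOn.integrableOn_compact' hs hs_meas)
    (Eventually.of_forall (autocorrelation_nonneg hf0))).symm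

end AddCommGroup

end MeasureTheory

theorem Continuous.tendsto_setIntegral_Icc_neg_div {g : ℝ → ℝ} (hg : Continuous g) :
    Tendsto (fun r => (∫ t in Icc (-r) r, g t) / r) (𝓝[>] 0) (𝓝 (2 * g 0)) := by
  let Φ : ℝ → ℝ := fun u => ∫ t in (0 : ℝ)..u, g t
  have hΦ : ∀ u, HasDerivAt Φ (g u) u := fun u => (hg.integral_hasStrictDerivAt 0 u).hasDerivAt
  have hsymm : HasDerivAt (fun r => Φ r - Φ (-r)) (2 * g 0) 0 := by
    have h := (hΦ 0).sub ((hΦ (-0)).comp 0 (hasDerivAt_neg 0))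
    rw [neg_zero] at h
    exact h.congr_deriv (by ring)
  refine hsymm.tendsto_slope_zero_right.congr' ?_
  filter_upwards [self_mem_nhdsWithin] with r (hr : 0 < r)
  rw [integral_Icc_eq_integral_Ioc, ← intervalIntegral.integral_of_le (by linarith),
    ← intervalIntegral.integral_interval_sub_left (hg.intervalIntegrable 0 r)
      (hg.intervalIntegrable 0 (-r))]
  simp [Φ, div_eq_inv_mul]

theorem correlation_limit_of_L2_density_general
    (ν : Measure ℝ) (f : ℝ → ℝ)
    (hf0 : ∀ᵐ x ∂(volume : Measure ℝ), 0 ≤ f x)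
    (hν : ν = volume.withDensity (fun x => ENNReal.ofReal (f x)))
    (hf2 : MemLp f 2 volume) :
    Filter.Tendsto
      (fun r : ℝ => ((ν.prod ν) {p : ℝ × ℝ | |p.1 - p.2| ≤ r}).toReal / r)
      (𝓝[>] (0 : ℝ)) (𝓝 (2 * ∫ x, f x ^ 2)) := by
  have hmass : ∀ r : ℝ, ((ν.prod ν) {p : ℝ × ℝ | |p.1 - p.2| ≤ r}).toReal
      = ∫ t in Icc (-r) r, autocorrelation volume f t := fun r => by
    have hset : {p : ℝ × ℝ | |p.1 - p.2| ≤ r} = (fun p : ℝ × ℝ => p.1 - p.2) ⁻¹' Icc (-r) r := by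
      ext p
      simp [abs_le]
    rw [hset, hν, hf2.withDensity_ofReal_prod_preimage_sub hf0 isCompact_Icc
      measurableSet_Icc, ENNReal.toReal_ofReal
      (setIntegral_nonneg measurableSet_Icc fun t _ => autocorrelation_nonneg hf0 t)]
  have hdiag : autocorrelation volume f 0 = ∫ x, f x ^ 2 := by
    simp [autocorrelation, sq]
  simpa only [hmass, hdiag] using hf2.continuous_autocorrelation.tendsto_setIntegral_Icc_neg_div

/-- If a finite Borel measure `ν` on `ℝ` is absolutely continuous with respect to Lebesgue
measure with density `f ∈ L²(ℝ)`, then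
`lim_{r→0⁺} (1/r)·(ν×ν){(x,y) : |x−y| ≤ r} = 2‖f‖₂²`. -/
theorem correlation_limit_of_L2_density
    (ν : Measure ℝ) [IsFiniteMeasure ν] (f : ℝ → ℝ)
    (hf0 : ∀ᵐ x ∂(volume : Measure ℝ), 0 ≤ f x)
    (hν : ν = volume.withDensity (fun x => ENNReal.ofReal (f x)))
    (hf2 : MemLp f 2 volume) :
    Filter.Tendsto
      (fun r : ℝ => ((ν.prod ν) {p : ℝ × ℝ | |p.1 - p.2| ≤ r}).toReal / r)
      (𝓝[>] (0 : ℝ)) (𝓝 (2 * ∫ x, f x ^ 2)) :=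
  correlation_limit_of_L2_density_general ν f hf0 hν hf2
end
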